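/- Let Γ be a semicomplete multipartite commutative weakly distance-regular digraph. If (2,s)∈∂̃(Γ), then s∈{1,2}. -/
import Mathlib


open Set Matrix

namespace Paper

variable {V : Type*} {W : Type*}

/-- There is a directed walk of length `n` from `x` to `y` in the digraph with arc relation `A`. -/
def HasPathOfLength (A : V → V → Prop) (x y : V) (n : ℕ) : Prop :=
  ∃ p : ℕ → V, p 0 = x ∧ p n = y ∧ ∀ i < n, A (p i) (p (i + 1))

/-- A digraph is strongly connected if there is a directed path between any two vertices. -/
def IsStronglyConnected (A : V → V → Prop) : Prop :=
  ∀ x y, ∃ n, HasPathOfLength A x y n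

/-- The distance `∂(x,y)`: the length of a shortest directed path from `x` to `y`. -/
noncomputable def ddist (A : V → V → Prop) (x y : V) : ℕ :=
  sInf {n | HasPathOfLength A x y n}

/-- The two-way distance `∂̃(x,y) = (∂(x,y), ∂(y,x))`. -/
noncomputable def tdist (A : V → V → Prop) (x y : V) : ℕ × ℕ :=
  (ddist A x y, ddist A y x)

/-- The two-way distance set `∂̃(Γ)`. -/
def tdistSet (A : V → V → Prop) : Set (ℕ × ℕ) :=
  {d | ∃ x y, tdist A x y = d}

/-- The number `p_{ĩ,j̃}(x,y) = |{z : ∂̃(x,z) = ĩ, ∂̃(z,y) = j̃}|`. -/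
noncomputable def pnum (A : V → V → Prop) (i j : ℕ × ℕ) (x y : V) : ℕ :=
  {z | tdist A x z = i ∧ tdist A z y = j}.ncard

/-- A weakly distance-regular digraph. -/
def IsWDRD (A : V → V → Prop) : Prop :=
  IsStronglyConnected A ∧
  (∃ d ∈ tdistSet A, d.1 ≠ d.2) ∧
  ∀ i j : ℕ × ℕ, ∀ x y x' y' : V,
    tdist A x y = tdist A x' y' → pnum A i j x y = pnum A i j x' y'

/-- Commutativity of the attached scheme: `p_{ĩ,j̃}^{h̃} = p_{j̃,ĩ}^{h̃}`. -/
def IsCommutativeDigraph (A : V → V → Prop) : Prop :=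
  ∀ i j : ℕ × ℕ, ∀ x y : V, pnum A i j x y = pnum A j i x y

/-- A commutative weakly distance-regular digraph. -/
def IsCWDRD (A : V → V → Prop) : Prop :=
  IsWDRD A ∧ IsCommutativeDigraph A

/-- `A` is semicomplete multipartite with partition given by `f` (parts are the fibres). -/
def IsSemicompleteMultipartiteWith (A : V → V → Prop) {m : ℕ} (f : V → Fin m) : Prop :=
  (∀ x, ¬ A x x) ∧ (∀ i, 2 ≤ {x | f x = i}.ncard) ∧
  ∀ x y : V, x ≠ y → ((A x y ∨ A y x) ↔ f x ≠ f y)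

/-- A semicomplete multipartite digraph: the vertex set is partitioned into `m ≥ 2` partite
sets, each of size at least `2`, and two distinct vertices are joined by an arc in at least
one direction iff they lie in different partite sets. -/
def IsSemicompleteMultipartite (A : V → V → Prop) : Prop :=
  ∃ m : ℕ, 2 ≤ m ∧ ∃ f : V → Fin m, IsSemicompleteMultipartiteWith A f

/-- A semicomplete digraph: any two distinct vertices are joined by an arc in
at least one direction. -/
def IsSemicomplete (A : V → V → Prop) : Prop :=
  (∀ x, ¬ A x x) ∧ ∀ x y : V, x ≠ y → A x y ∨ A y x

/-- A circuit of length `n`: a sequence `w₀,…,w_{n-1}` with consecutive arcs and an arc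
from `w_{n-1}` back to `w₀`. -/
def HasCircuitOfLength (A : V → V → Prop) (n : ℕ) : Prop :=
  ∃ p : ℕ → V, p n = p 0 ∧ ∀ i < n, A (p i) (p (i + 1))

/-- The girth: the length of a shortest circuit. -/
noncomputable def girth (A : V → V → Prop) : ℕ :=
  sInf {n | 1 ≤ n ∧ HasCircuitOfLength A n}

/-- Lexicographic product of digraphs. -/
def lexProd (A : V → V → Prop) (B : W → W → Prop) : V × W → V × W → Prop :=
  fun u v => A u.1 v.1 ∨ (u.1 = v.1 ∧ B u.2 v.2)

/-- The `n`-coclique extension of a digraph: `A ∘ K̄ₙ`. -/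
def cocliqueExt (A : V → V → Prop) (n : ℕ) : V × Fin n → V × Fin n → Prop :=
  lexProd A (fun _ _ : Fin n => False)

/-- Isomorphism of digraphs. -/
def Iso (A : V → V → Prop) (B : W → W → Prop) : Prop :=
  ∃ e : V ≃ W, ∀ x y : V, A x y ↔ B (e x) (e y)

/-- An `(m,r)`-team semicomplete multipartite digraph with partite sets the fibres of `f`:
`m ≥ 2` parts, each of size `r ≥ 2`. -/
def IsTeamSMD (A : V → V → Prop) {m : ℕ} (f : V → Fin m) (r : ℕ) : Prop :=
  2 ≤ m ∧ 2 ≤ r ∧ (∀ x, ¬ A x x) ∧ (∀ i : Fin m, {x | f x = i}.ncard = r) ∧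
  ∀ x y : V, x ≠ y → ((A x y ∨ A y x) ↔ f x ≠ f y)

/-- Regular of valency `k`: every vertex has exactly `k` out-neighbours and `k`
in-neighbours. -/
def IsRegularOfValency (A : V → V → Prop) (k : ℕ) : Prop :=
  ∀ x : V, {y | A x y}.ncard = k ∧ {y | A y x}.ncard = k

open Classical in
/-- Adjacency matrix of the symmetric part `EΓ`. -/
noncomputable def matE (A : V → V → Prop) : Matrix V V ℤ :=
  Matrix.of fun x y => if A x y ∧ A y x then 1 else 0

open Classical in
/-- Adjacency matrix of the asymmetric part `A⃗Γ`. -/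
noncomputable def matAr (A : V → V → Prop) : Matrix V V ℤ :=
  Matrix.of fun x y => if A x y ∧ ¬ A y x then 1 else 0

open Classical in
/-- Adjacency matrix of a digraph. -/
noncomputable def matAdj (A : V → V → Prop) : Matrix V V ℤ :=
  Matrix.of fun x y => if A x y then 1 else 0

/-- The all-ones matrix `J`. -/
def matJ (V : Type*) : Matrix V V ℤ := Matrix.of fun _ _ => 1

open Classical in
/-- The matrix equations in the definition of a doubly regular team semicomplete multipartite
digraph, with constants `t, αᵢ, βᵢ, γᵢ, ηᵢ` (`A₀ = matE A`, `A₁ = matAr A`). -/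
def DRConstEq [Fintype V] (A : V → V → Prop) (t : ℤ) (α β γ η : ℕ → ℤ) : Prop :=
  ∀ i j : Fin 2,
    ![matE A, matAr A] i * ![matE A, matAr A] j =
      (if (i : ℕ) + (j : ℕ) = 0 then t else 0) • (1 : Matrix V V ℤ) +
      α ((i : ℕ) + (j : ℕ)) • matAr A +
      β ((i : ℕ) + (j : ℕ)) • (matAr A)ᵀ +
      γ ((i : ℕ) + (j : ℕ)) • matE A +
      η ((i : ℕ) + (j : ℕ)) • (matJ V - 1 - matAr A - (matAr A)ᵀ - matE A)

/-- A doubly regular `(m,r)`-team semicomplete multipartite digraph. -/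
def IsDoublyRegularTeamSMD [Fintype V] (A : V → V → Prop) {m : ℕ} (f : V → Fin m)
    (r : ℕ) : Prop :=
  IsTeamSMD A f r ∧ (∃ k, IsRegularOfValency A k) ∧
  ∃ t α β γ η, DRConstEq A t α β γ η

/-- `A_j⁺(x)`: out-neighbours of `x` in the part `j` via single arcs. -/
def Aplus (A : V → V → Prop) {m : ℕ} (f : V → Fin m) (j : Fin m) (x : V) : Set V :=
  {y | f y = j ∧ A x y ∧ ¬ A y x}

/-- `E_j(x)`: neighbours of `x` in the part `j` via edges (pairs of opposite arcs). -/
def Epart (A : V → V → Prop) {m : ℕ} (f : V → Fin m) (j : Fin m) (x : V) : Set V :=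
  {y | f y = j ∧ A x y ∧ A y x}

/-- Type I: `β₁+β₂-α₁-α₂ = r` and the digraph is an `r`-coclique extension of a
semicomplete digraph. -/
def TypeI (A : V → V → Prop) (r : ℕ) (α β : ℕ → ℤ) : Prop :=
  β 1 + β 2 - α 1 - α 2 = (r : ℤ) ∧
  ∃ (N : ℕ) (S : Fin N → Fin N → Prop),
    1 ≤ N ∧ IsSemicomplete S ∧ Iso A (cocliqueExt S r)

/-- Type II: `β₁+β₂-α₁-α₂ = 0` and `c_{ij} = c_{ji} = (r - e_{ij})/2` for all pairs `i ≠ j`. -/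
def TypeII (A : V → V → Prop) {m : ℕ} (f : V → Fin m) (r : ℕ) (α β : ℕ → ℤ) : Prop :=
  β 1 + β 2 - α 1 - α 2 = 0 ∧
  ∀ i j : Fin m, i ≠ j → ∃ c e : ℕ,
    (∀ x, f x = i → (Aplus A f j x).ncard = c ∧ (Epart A f j x).ncard = e) ∧
    (∀ y, f y = j → (Aplus A f i y).ncard = c) ∧
    c + c + e = r

/-- Condition (ii) of Type III for the ordered pair `(i,j)`: `V_i` splits as
`V_i' ∪ V_i''` with `(V_i' × V_j) ∪ (V_j × V_i'') ⊆ A⃗Γ`. -/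
def TypeIIIsplitB (A : V → V → Prop) {m : ℕ} (f : V → Fin m) (i j : Fin m) : Prop :=
  ∃ S : Set V, S ⊆ {x | f x = i} ∧ S.Nonempty ∧ ({x | f x = i} \ S).Nonempty ∧
    (∀ x ∈ S, ∀ y : V, f y = j → A x y ∧ ¬ A y x) ∧
    (∀ y : V, f y = j → ∀ x ∈ {x | f x = i} \ S, A y x ∧ ¬ A x y)

/-- Condition (iii) of Type III for the pair `(i,j)`. -/
def TypeIIIsplitC (A : V → V → Prop) {m : ℕ} (f : V → Fin m) (i j : Fin m) : Prop :=
  ∃ S T' : Set V,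
    S ⊆ {x | f x = i} ∧ S.Nonempty ∧ ({x | f x = i} \ S).Nonempty ∧
    T' ⊆ {y | f y = j} ∧ T'.Nonempty ∧ ({y | f y = j} \ T').Nonempty ∧
    (∀ x ∈ S, ∀ y ∈ T', A x y ∧ A y x) ∧
    (∀ x ∈ {x | f x = i} \ S, ∀ y ∈ {y | f y = j} \ T', A x y ∧ A y x) ∧
    (∀ x ∈ S, ∀ y ∈ {y | f y = j} \ T', A x y ∧ ¬ A y x) ∧
    (∀ y ∈ T', ∀ x ∈ {x | f x = i} \ S, A y x ∧ ¬ A x y)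

/-- Type III. -/
def TypeIII (A : V → V → Prop) {m : ℕ} (f : V → Fin m) (r : ℕ) (α β : ℕ → ℤ) : Prop :=
  2 * (β 1 + β 2 - α 1 - α 2) = (r : ℤ) ∧
  ∀ i j : Fin m, i ≠ j →
    (∀ x y : V, f x = i → f y = j → A x y ∧ A y x) ∨
    (TypeIIIsplitB A f i j ∨ TypeIIIsplitB A f j i) ∨
    TypeIIIsplitC A f i j

/-- An `(m,r)`-team tournament: an `(m,r)`-team semicomplete multipartite digraph with
no pair of opposite arcs. -/
def IsTeamTournament (A : V → V → Prop) {m : ℕ} (f : V → Fin m) (r : ℕ) : Prop :=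
  IsTeamSMD A f r ∧ ∀ x y : V, ¬ (A x y ∧ A y x)

open Classical in
/-- A doubly regular `(m,r)`-team tournament with parameters `(α,β,γ)`:
`A² = αA + βAᵀ + γ(J - I - A - Aᵀ)`. -/
def IsDRTeamTournament [Fintype V] (A : V → V → Prop) {m : ℕ} (f : V → Fin m) (r : ℕ)
    (α β γ : ℤ) : Prop :=
  IsTeamTournament A f r ∧ (∃ k, IsRegularOfValency A k) ∧
  matAdj A * matAdj A =
    α • matAdj A + β • (matAdj A)ᵀ + γ • (matJ V - 1 - matAdj A - (matAdj A)ᵀ)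

/-- Type II of a doubly regular team tournament: `β - α = 0`, `r` even, and
`|N⁺(x) ∩ V_i| = r/2` for every partite set `V_i` and vertex `x ∉ V_i`. -/
def TournamentTypeII (A : V → V → Prop) {m : ℕ} (f : V → Fin m) (r : ℕ) (α β : ℤ) : Prop :=
  β = α ∧ Even r ∧ ∀ (i : Fin m) (x : V), f x ≠ i → 2 * {y | f y = i ∧ A x y}.ncard = r

/-- The Cayley digraph `Cay(ℤ₆, {1,2})`. -/
def Cay6 : ZMod 6 → ZMod 6 → Prop := fun x y => y - x = 1 ∨ y - x = 2

/-- The directed cycle `C₄`. -/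
def C4 : ZMod 4 → ZMod 4 → Prop := fun x y => y = x + 1

section Aux9

variable {A : V → V → Prop}

lemma hasPath_single {x y : V} (h : A x y) : HasPathOfLength A x y 1 := by
  refine ⟨fun i => if i = 0 then x else y, by simp, by simp, ?_⟩
  intro i hi
  have hi0 : i = 0 := by omega
  subst hi0
  simpa using h

lemma hasPath_refl (A : V → V → Prop) (x : V) : HasPathOfLength A x x 0 :=
  ⟨fun _ => x, rfl, rfl, fun i hi => absurd hi (by omega)⟩

lemma hasPath_trans {x y z : V} {n m : ℕ} (h1 : HasPathOfLength A x y n)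
    (h2 : HasPathOfLength A y z m) : HasPathOfLength A x z (n + m) := by
  obtain ⟨p, hp0, hpn, hp⟩ := h1
  obtain ⟨q, hq0, hqm, hq⟩ := h2
  refine ⟨fun k => if k < n then p k else q (k - n), ?_, ?_, ?_⟩
  · by_cases h : 0 < n
    · simpa [h] using hp0
    · have hn : n = 0 := by omega
      subst hn
      simp only [lt_irrefl, if_neg, Nat.sub_zero, not_false_iff]
      rw [hq0, ← hpn, hp0]
  · have h1' : ¬ (n + m < n) := by omega
    simp only [h1', if_false]
    rw [show n + m - n = m by omega, hqm]
  · intro i hi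
    by_cases hc1 : i + 1 < n
    · have hc0 : i < n := by omega
      simp only [hc0, hc1, if_true]
      exact hp i hc0
    · by_cases hc0 : i < n
      · have hin : i + 1 = n := by omega
        simp only [hc0, if_true, hc1, if_false]
        have he : q (i + 1 - n) = p (i + 1) := by
          rw [hin, Nat.sub_self, hq0, ← hpn]
        rw [he]
        exact hp i hc0
      · simp only [hc0, hc1, if_false]
        have he : i + 1 - n = (i - n) + 1 := by omega
        rw [he]
        exact hq (i - n) (by omega)

lemma ddist_le {x y : V} {n : ℕ} (h : HasPathOfLength A x y n) : ddist A x y ≤ n :=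
  Nat.sInf_le h

lemma ddist_self (A : V → V → Prop) (x : V) : ddist A x x = 0 :=
  Nat.sInf_eq_zero.2 (Or.inl (hasPath_refl A x))

lemma tdist_self (A : V → V → Prop) (x : V) : tdist A x x = (0, 0) := by
  simp [tdist, ddist_self]

lemma hasPath_ddist {x y : V} (hne : ∃ n, HasPathOfLength A x y n) :
    HasPathOfLength A x y (ddist A x y) :=
  Nat.sInf_mem hne

lemma ddist_eq_one_iff (hirr : ∀ v, ¬ A v v) (hsc : IsStronglyConnected A) {x y : V} :
    ddist A x y = 1 ↔ A x y := by
  constructor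
  · intro h
    have hp := hasPath_ddist (A := A) (hsc x y)
    rw [h] at hp
    obtain ⟨p, h0, h1, ha⟩ := hp
    have := ha 0 (by omega)
    rwa [h0, h1] at this
  · intro h
    have hle : ddist A x y ≤ 1 := ddist_le (hasPath_single h)
    have hne : ddist A x y ≠ 0 := by
      intro h0
      have hp := hasPath_ddist (A := A) (hsc x y)
      rw [h0] at hp
      obtain ⟨p, hp0, hpn, _⟩ := hp
      have hxy : x = y := by rw [← hp0, hpn]
      exact hirr x (hxy ▸ h)
    omega

lemma ddist_lt_card [Fintype V] {x y : V}
    (hne : ∃ n, HasPathOfLength A x y n) : ddist A x y < Fintype.card V := by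
  by_contra hge
  push_neg at hge
  set d := ddist A x y with hd
  obtain ⟨p, h0, hdn, harc⟩ := hasPath_ddist (A := A) hne
  obtain ⟨i, j, hij, hpij⟩ := Fintype.exists_ne_map_eq_of_card_lt
    (fun i : Fin (d + 1) => p i) (by simp; omega)
  have main : ∀ a b : ℕ, a ≤ d → b ≤ d → a < b → p a = p b → False := by
    intro a b ha hb hab hpab
    have hshort : HasPathOfLength A x y (d - (b - a)) := by
      refine ⟨fun k => if k < a then p k else p (k + (b - a)), ?_, ?_, ?_⟩
      · by_cases h0a : 0 < a
        · simpa [h0a] using h0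
        · have ha0 : a = 0 := by omega
          subst ha0
          show (if 0 < 0 then p 0 else p (0 + (b - 0))) = x
          rw [if_neg (by omega), show (0 : ℕ) + (b - 0) = b from by omega, ← hpab, h0]
      · have hna : ¬ (d - (b - a) < a) := by omega
        simp only [hna, if_false]
        rw [show d - (b - a) + (b - a) = d by omega, hdn]
      · intro k hk
        by_cases hc1 : k + 1 < a
        · have hc0 : k < a := by omega
          simp only [hc0, hc1, if_true]
          exact harc k (by omega)
        · by_cases hc0 : k < a
          · have hka : k + 1 = a := by omega
            simp only [hc0, if_true, hc1, if_false]
            have he : p (k + 1 + (b - a)) = p (k + 1) := by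
              rw [hka, show a + (b - a) = b by omega, ← hpab]
            rw [he]
            exact harc k (by omega)
          · simp only [hc0, hc1, if_false]
            have he : k + 1 + (b - a) = (k + (b - a)) + 1 := by omega
            rw [he]
            exact harc (k + (b - a)) (by omega)
    have := ddist_le hshort
    omega
  rcases lt_or_gt_of_ne (fun h : (i : ℕ) = (j : ℕ) => hij (Fin.ext h)) with hlt | hlt
  · exact main i j (by omega) (by omega) hlt hpij
  · exact main j i (by omega) (by omega) hlt hpij.symm

lemma pnum_out (A : V → V → Prop) (u : V) (a : ℕ) :
    pnum A (1, a) (a, 1) u u = {z | tdist A u z = (1, a)}.ncard := by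
  unfold pnum
  congr 1
  ext z
  simp only [Set.mem_setOf_eq, tdist, Prod.mk.injEq]
  tauto

lemma pnum_in (A : V → V → Prop) (u : V) (a : ℕ) :
    pnum A (a, 1) (1, a) u u = {z | tdist A u z = (a, 1)}.ncard := by
  unfold pnum
  congr 1
  ext z
  simp only [Set.mem_setOf_eq, tdist, Prod.mk.injEq]
  tauto

open Classical in
lemma outdeg_eq [Fintype V] (hirr : ∀ v, ¬ A v v) (hsc : IsStronglyConnected A)
    (hwdr : ∀ i j : ℕ × ℕ, ∀ x y x' y' : V,
      tdist A x y = tdist A x' y' → pnum A i j x y = pnum A i j x' y')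
    (x y : V) : {z | A x z}.ncard = {z | A y z}.ncard := by
  have key : ∀ u : V, {z | A u z}.ncard =
      ∑ a ∈ Finset.range (Fintype.card V), pnum A (1, a) (a, 1) u u := by
    intro u
    have hset : {z | A u z} = ↑((Finset.range (Fintype.card V)).biUnion
        (fun a => Finset.univ.filter (fun z => tdist A u z = (1, a)))) := by
      ext z
      simp only [Set.mem_setOf_eq, Finset.coe_biUnion, Set.mem_iUnion, Finset.mem_coe,
        Finset.mem_range, Finset.mem_filter, Finset.mem_univ, true_and]
      constructor
      · intro hz
        refine ⟨ddist A z u, ddist_lt_card (hsc z u), ?_⟩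
        have h1 : ddist A u z = 1 := (ddist_eq_one_iff hirr hsc).2 hz
        simp [tdist, h1]
      · rintro ⟨a, -, hz⟩
        have h1 : ddist A u z = 1 := by
          have := congrArg Prod.fst hz
          simpa [tdist] using this
        exact (ddist_eq_one_iff hirr hsc).1 h1
    rw [hset, Set.ncard_coe_finset, Finset.card_biUnion]
    · refine Finset.sum_congr rfl fun a _ => ?_
      rw [pnum_out]
      have hs2 : {z | tdist A u z = (1, a)} =
          ↑(Finset.univ.filter fun z => tdist A u z = (1, a)) := by
        ext z; simp
      rw [hs2, Set.ncard_coe_finset]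
    · intro a _ b _ hab
      simp only [Finset.disjoint_left, Finset.mem_filter, Finset.mem_univ, true_and]
      rintro z h1 h2
      rw [h1] at h2
      exact hab (by simpa using congrArg Prod.snd h2)
  rw [key x, key y]
  exact Finset.sum_congr rfl fun a _ =>
    hwdr (1, a) (a, 1) x x y y (by rw [tdist_self, tdist_self])

open Classical in
lemma indeg_eq [Fintype V] (hirr : ∀ v, ¬ A v v) (hsc : IsStronglyConnected A)
    (hwdr : ∀ i j : ℕ × ℕ, ∀ x y x' y' : V,
      tdist A x y = tdist A x' y' → pnum A i j x y = pnum A i j x' y')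
    (x y : V) : {z | A z x}.ncard = {z | A z y}.ncard := by
  have key : ∀ u : V, {z | A z u}.ncard =
      ∑ a ∈ Finset.range (Fintype.card V), pnum A (a, 1) (1, a) u u := by
    intro u
    have hset : {z | A z u} = ↑((Finset.range (Fintype.card V)).biUnion
        (fun a => Finset.univ.filter (fun z => tdist A u z = (a, 1)))) := by
      ext z
      simp only [Set.mem_setOf_eq, Finset.coe_biUnion, Set.mem_iUnion, Finset.mem_coe,
        Finset.mem_range, Finset.mem_filter, Finset.mem_univ, true_and]
      constructor
      · intro hz
        refine ⟨ddist A u z, ddist_lt_card (hsc u z), ?_⟩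
        have h1 : ddist A z u = 1 := (ddist_eq_one_iff hirr hsc).2 hz
        simp [tdist, h1]
      · rintro ⟨a, -, hz⟩
        have h1 : ddist A z u = 1 := by
          have := congrArg Prod.snd hz
          simpa [tdist] using this
        exact (ddist_eq_one_iff hirr hsc).1 h1
    rw [hset, Set.ncard_coe_finset, Finset.card_biUnion]
    · refine Finset.sum_congr rfl fun a _ => ?_
      rw [pnum_in]
      have hs2 : {z | tdist A u z = (a, 1)} =
          ↑(Finset.univ.filter fun z => tdist A u z = (a, 1)) := by
        ext z; simp
      rw [hs2, Set.ncard_coe_finset]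
    · intro a _ b _ hab
      simp only [Finset.disjoint_left, Finset.mem_filter, Finset.mem_univ, true_and]
      rintro z h1 h2
      rw [h1] at h2
      exact hab (by simpa using congrArg Prod.fst h2)
  rw [key x, key y]
  exact Finset.sum_congr rfl fun a _ =>
    hwdr (a, 1) (1, a) x x y y (by rw [tdist_self, tdist_self])

end Aux9

/-- if `(2,s) ∈ ∂̃(Γ)` then `s ∈ {1,2}`. -/
theorem statement_9 {V : Type*} [Fintype V] [Nonempty V] (A : V → V → Prop)
    (hsm : IsSemicompleteMultipartite A) (h : IsCWDRD A)
    (s : ℕ) (hs : ((2 : ℕ), s) ∈ tdistSet A) :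
    s = 1 ∨ s = 2 := by
  obtain ⟨m, hm, f, hirr, hsize, hadj⟩ := hsm
  obtain ⟨⟨hsc, -, hwdr⟩, -⟩ := h
  obtain ⟨x, y, hxy⟩ := hs
  have dxy : ddist A x y = 2 := by
    have := congrArg Prod.fst hxy; simpa [tdist] using this
  have dyx : ddist A y x = s := by
    have := congrArg Prod.snd hxy; simpa [tdist] using this
  have hxny : x ≠ y := by
    rintro rfl
    rw [ddist_self] at dxy
    omega
  have hs0 : s ≠ 0 := by
    intro h0
    have hp := hasPath_ddist (A := A) (hsc y x)
    rw [dyx, h0] at hp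
    obtain ⟨p, hp0, hpn, -⟩ := hp
    exact hxny (by rw [← hpn, hp0])
  by_contra hcon
  push_neg at hcon
  have hs3 : 3 ≤ s := by omega
  have hnAxy : ¬ A x y := by
    intro hA
    have := ddist_le (hasPath_single hA)
    omega
  have hnAyx : ¬ A y x := by
    intro hA
    have := ddist_le (hasPath_single hA)
    omega
  have hf : f x = f y := by
    by_contra hne
    have := (hadj x y hxny).2 hne
    tauto
  have no2 : ∀ w, ¬ (A y w ∧ A w x) := by
    rintro w ⟨h1, h2⟩
    have := ddist_le (hasPath_trans (hasPath_single h1) (hasPath_single h2))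
    omega
  have hSsub : {z | A y z} ⊆ {z | A x z} := by
    intro w hw
    simp only [Set.mem_setOf_eq] at hw ⊢
    have hwy : w ≠ y := fun h => hirr y (h ▸ hw)
    have hwx : w ≠ x := fun h => hnAyx (h ▸ hw)
    have hfw : f y ≠ f w := (hadj y w (Ne.symm hwy)).1 (Or.inl hw)
    have hfxw : f x ≠ f w := hf ▸ hfw
    rcases (hadj x w (Ne.symm hwx)).2 hfxw with hA | hA
    · exact hA
    · exact absurd ⟨hw, hA⟩ (no2 w)
  have hSeq : {z | A y z} = {z | A x z} :=
    Set.eq_of_subset_of_ncard_le hSsub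
      (le_of_eq (outdeg_eq hirr hsc hwdr x y)) (Set.toFinite _)
  have hTsub : {z | A z x} ⊆ {z | A z y} := by
    intro w hw
    simp only [Set.mem_setOf_eq] at hw ⊢
    have hwx : w ≠ x := fun h => hirr x (h ▸ hw)
    have hwy : w ≠ y := fun h => hnAyx (by rw [← h]; exact hw)
    have hfw : f w ≠ f x := (hadj w x hwx).1 (Or.inl hw)
    have hfwy : f w ≠ f y := fun h => hfw (h.trans hf.symm)
    rcases (hadj w y hwy).2 hfwy with hA | hA
    · exact hA
    · exact absurd ⟨hA, hw⟩ (no2 w)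
  have hTeq : {z | A z x} = {z | A z y} :=
    Set.eq_of_subset_of_ncard_le hTsub
      (le_of_eq (indeg_eq hirr hsc hwdr y x)) (Set.toFinite _)
  have hp := hasPath_ddist (A := A) (hsc x y)
  rw [dxy] at hp
  obtain ⟨p, h0, h2, harc⟩ := hp
  have ha1 : A x (p 1) := by
    have := harc 0 (by omega)
    rwa [h0] at this
  have ha2 : A (p 1) y := by
    have := harc 1 (by omega)
    rwa [h2] at this
  have hy1 : A y (p 1) := (Set.ext_iff.1 hSeq (p 1)).2 ha1
  have h1x : A (p 1) x := (Set.ext_iff.1 hTeq (p 1)).2 ha2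
  exact no2 (p 1) ⟨hy1, h1x⟩

end Paper
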